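/- arXiv:2409.03191 — 8 statements merged into one kernel-verified Lean document; each statement's English description precedes it below -/
import Mathlib

section
/- Let a, b > 0 with a²/4 > b and c₁ = a/2 + √(a²/4 − b). Consider f(x) = 27c₁²x² − (b + 2x)³ on the interval (0, b). Then f attains its minimum on (0, b) only at x₁ = (9c₁² − 4b − 3c₁√(9c₁² − 8b))/8, f is strictly monotonically increasing on (x₁, b), and the equation f(x) = 0 has a unique solution x* in (0, b), which lies in (x₁, b). -/
/-!
The derivative factors as `f' x = -24 (x - x₁) (x - x₂)` with `0 < x₁ < b < x₂`, so `f` strictly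
decreases on `[0, x₁]` and strictly increases on `[x₁, x₂] ⊇ [x₁, b]`. Since `f 0 = -b³ < 0` and
`f b = 27 b² (c₁² - b) > 0`, `f` is negative on `(0, x₁]` and has exactly one zero, in `(x₁, b)`.
-/

open Set

lemma half_add_sqrt_pos_and_lt_sq {a b : ℝ} (ha : 0 < a) (hab : b < a ^ 2 / 4) :
    0 < a / 2 + √(a ^ 2 / 4 - b) ∧ b < (a / 2 + √(a ^ 2 / 4 - b)) ^ 2 := by
  have hs := Real.sqrt_nonneg (a ^ 2 / 4 - b)
  constructor <;> nlinarith

def cubicFn (b c x : ℝ) : ℝ := 27 * c ^ 2 * x ^ 2 - (b + 2 * x) ^ 3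

namespace cubicFn

/-- `critLow b c` and `critHigh b c` are the roots of the derivative `-6 (4x² - (9c² - 4b)x + b²)`
of `cubicFn b c`; the discriminant of the quadratic is `9c² (9c² - 8b)`. -/
noncomputable def critLow (b c : ℝ) : ℝ := (9 * c ^ 2 - 4 * b - 3 * c * √(9 * c ^ 2 - 8 * b)) / 8

noncomputable def critHigh (b c : ℝ) : ℝ := (9 * c ^ 2 - 4 * b + 3 * c * √(9 * c ^ 2 - 8 * b)) / 8

variable {b c : ℝ}

lemma critLow_le_critHigh (hc : 0 ≤ c) : critLow b c ≤ critHigh b c := by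
  unfold critLow critHigh
  nlinarith [mul_nonneg hc (Real.sqrt_nonneg (9 * c ^ 2 - 8 * b))]

lemma hasDerivAt (h : 0 ≤ 9 * c ^ 2 - 8 * b) (x : ℝ) :
    HasDerivAt (cubicFn b c) (-24 * (x - critLow b c) * (x - critHigh b c)) x := by
  have hs : √(9 * c ^ 2 - 8 * b) ^ 2 = 9 * c ^ 2 - 8 * b := Real.sq_sqrt h
  have hlin : HasDerivAt (fun x : ℝ => b + 2 * x) 2 x := by
    simpa using ((hasDerivAt_id x).const_mul 2).const_add b
  refine (((hasDerivAt_pow 2 x).const_mul (27 * c ^ 2)).sub (hlin.pow 3)).congr_deriv ?_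
  unfold critLow critHigh
  linear_combination (-(27 / 8) * c ^ 2) * hs

lemma continuous (h : 0 ≤ 9 * c ^ 2 - 8 * b) : Continuous (cubicFn b c) :=
  continuous_iff_continuousAt.mpr fun x => (hasDerivAt h x).continuousAt

lemma strictAntiOn_Iic (hc : 0 ≤ c) (h : 0 ≤ 9 * c ^ 2 - 8 * b) :
    StrictAntiOn (cubicFn b c) (Iic (critLow b c)) := by
  refine strictAntiOn_of_deriv_neg (convex_Iic _) (continuous h).continuousOn fun x hx => ?_
  rw [interior_Iic] at hx
  have hhigh := (critLow_le_critHigh (b := b) hc).trans_lt' hx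
  rw [(hasDerivAt h x).deriv]
  nlinarith [mul_pos (sub_pos.mpr hx) (sub_pos.mpr hhigh)]

lemma strictMonoOn_Icc (h : 0 ≤ 9 * c ^ 2 - 8 * b) :
    StrictMonoOn (cubicFn b c) (Icc (critLow b c) (critHigh b c)) := by
  refine strictMonoOn_of_deriv_pos (convex_Icc _ _) (continuous h).continuousOn fun x hx => ?_
  rw [interior_Icc] at hx
  rw [(hasDerivAt h x).deriv]
  nlinarith [mul_pos (sub_pos.mpr hx.1) (sub_pos.mpr hx.2)]

lemma nine_sq_sub_pos (hb : 0 < b) (hbc : b < c ^ 2) : 0 < 9 * c ^ 2 - 8 * b := by nlinarith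

variable (hb : 0 < b) (hc : 0 < c) (hbc : b < c ^ 2)
include hb hc hbc

lemma critLow_pos : 0 < critLow b c := by
  have hs := Real.sq_sqrt (nine_sq_sub_pos hb hbc).le
  have hcs := mul_pos hc (Real.sqrt_pos.mpr (nine_sq_sub_pos hb hbc))
  unfold critLow
  nlinarith [sq_nonneg (9 * c ^ 2 - 4 * b - 3 * c * √(9 * c ^ 2 - 8 * b))]

lemma critLow_lt : critLow b c < b := by
  have hs := Real.sq_sqrt (nine_sq_sub_pos hb hbc).le
  have hcs := mul_pos hc (Real.sqrt_pos.mpr (nine_sq_sub_pos hb hbc))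
  unfold critLow
  nlinarith [mul_pos hb (sub_pos.mpr hbc),
    sq_nonneg (c * √(9 * c ^ 2 - 8 * b) - (3 * c ^ 2 - 4 * b))]

lemma lt_critHigh : b < critHigh b c := by
  have hs := Real.sq_sqrt (nine_sq_sub_pos hb hbc).le
  have hcs := mul_pos hc (Real.sqrt_pos.mpr (nine_sq_sub_pos hb hbc))
  unfold critHigh
  nlinarith [mul_pos hb (sub_pos.mpr hbc),
    sq_nonneg (c * √(9 * c ^ 2 - 8 * b) - (4 * b - 3 * c ^ 2))]

lemma strictMonoOn_Icc_critLow_self : StrictMonoOn (cubicFn b c) (Icc (critLow b c) b) :=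
  (strictMonoOn_Icc (nine_sq_sub_pos hb hbc).le).mono
    (Icc_subset_Icc_right (lt_critHigh hb hc hbc).le)

lemma neg_of_le_critLow {x : ℝ} (hx : 0 < x) (hle : x ≤ critLow b c) : cubicFn b c x < 0 := by
  have hanti := strictAntiOn_Iic hc.le (nine_sq_sub_pos hb hbc).le
    (show (0 : ℝ) ∈ Iic (critLow b c) from hx.le.trans hle) hle hx
  have h0 : cubicFn b c 0 = -b ^ 3 := by unfold cubicFn; ring
  linarith [pow_pos hb 3]

lemma critLow_lt_of_eq_zero {x : ℝ} (hx : x ∈ Ioo 0 b) (hfx : cubicFn b c x = 0) :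
    critLow b c < x :=
  lt_of_not_ge fun hle => (neg_of_le_critLow hb hc hbc hx.1 hle).ne hfx

lemma lt_of_ne_critLow {x : ℝ} (hx : x ∈ Ioo 0 b) (hne : x ≠ critLow b c) :
    cubicFn b c (critLow b c) < cubicFn b c x := by
  rcases hne.lt_or_gt with hlt | hgt
  · exact strictAntiOn_Iic hc.le (nine_sq_sub_pos hb hbc).le hlt.le self_mem_Iic hlt
  · exact strictMonoOn_Icc_critLow_self hb hc hbc (left_mem_Icc.mpr (critLow_lt hb hc hbc).le)
      ⟨hgt.le, hx.2.le⟩ hgt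

lemma exists_eq_zero : ∃ x ∈ Ioo (critLow b c) b, cubicFn b c x = 0 := by
  have hlow := neg_of_le_critLow hb hc hbc (critLow_pos hb hc hbc) le_rfl
  have hb' : 0 < cubicFn b c b := by
    have : cubicFn b c b = 27 * b ^ 2 * (c ^ 2 - b) := by unfold cubicFn; ring
    rw [this]; exact mul_pos (by positivity) (sub_pos.mpr hbc)
  exact intermediate_value_Ioo (critLow_lt hb hc hbc).le
    (continuous (nine_sq_sub_pos hb hbc).le).continuousOn ⟨hlow, hb'⟩

lemma existsUnique_eq_zero : ∃! x, x ∈ Ioo 0 b ∧ cubicFn b c x = 0 := by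
  obtain ⟨x, hx, hfx⟩ := exists_eq_zero hb hc hbc
  refine ⟨x, ⟨⟨(critLow_pos hb hc hbc).trans hx.1, hx.2⟩, hfx⟩, fun y ⟨hy, hfy⟩ => ?_⟩
  exact strictMonoOn_Icc_critLow_self hb hc hbc |>.injOn
    ⟨(critLow_lt_of_eq_zero hb hc hbc hy hfy).le, hy.2.le⟩ ⟨hx.1.le, hx.2.le⟩ (hfy.trans hfx.symm)

end cubicFn

theorem stmt_1 (a b : ℝ) (ha : 0 < a) (hb : 0 < b) (hab : a ^ 2 / 4 > b)
    (c₁ : ℝ) (hc₁ : c₁ = a / 2 + Real.sqrt (a ^ 2 / 4 - b))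
    (f : ℝ → ℝ) (hf : ∀ x, f x = 27 * c₁ ^ 2 * x ^ 2 - (b + 2 * x) ^ 3)
    (x₁ : ℝ)
    (hx₁ : x₁ = (9 * c₁ ^ 2 - 4 * b - 3 * c₁ * Real.sqrt (9 * c₁ ^ 2 - 8 * b)) / 8) :
    x₁ ∈ Set.Ioo (0 : ℝ) b ∧
    (∀ x ∈ Set.Ioo (0 : ℝ) b, f x₁ ≤ f x) ∧
    (∀ x ∈ Set.Ioo (0 : ℝ) b, x ≠ x₁ → f x₁ < f x) ∧
    StrictMonoOn f (Set.Ioo x₁ b) ∧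
    (∃! x : ℝ, x ∈ Set.Ioo (0 : ℝ) b ∧ f x = 0) ∧
    (∀ x ∈ Set.Ioo (0 : ℝ) b, f x = 0 → x ∈ Set.Ioo x₁ b) := by
  obtain ⟨hc, hbc⟩ := hc₁ ▸ half_add_sqrt_pos_and_lt_sq ha hab
  obtain rfl : f = cubicFn b c₁ := funext hf
  obtain rfl : x₁ = cubicFn.critLow b c₁ := hx₁
  have hmin : ∀ x ∈ Ioo 0 b, x ≠ cubicFn.critLow b c₁ → _ := fun x hx hne =>
    cubicFn.lt_of_ne_critLow hb hc hbc hx hne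
  refine ⟨⟨cubicFn.critLow_pos hb hc hbc, cubicFn.critLow_lt hb hc hbc⟩, ?_, hmin,
    (cubicFn.strictMonoOn_Icc_critLow_self hb hc hbc).mono Ioo_subset_Icc_self,
    cubicFn.existsUnique_eq_zero hb hc hbc,
    fun x hx hfx => ⟨cubicFn.critLow_lt_of_eq_zero hb hc hbc hx hfx, hx.2⟩⟩
  intro x hx
  rcases eq_or_ne x (cubicFn.critLow b c₁) with rfl | hne
  · exact le_rfl
  · exact (hmin x hx hne).le
end

section
/- Let a, b > 0 with a²/4 > b and c₁ = a/2 + √(a²/4 − b). The two real roots of the quadratic 4x² − (9c₁² − 4b)x + b² = 0, namely x₁ = (9c₁² − 4b − 3c₁√(9c₁² − 8b))/8 and x₂ = (9c₁² − 4b + 3c₁√(9c₁² − 8b))/8, satisfy 0 < x₁ < b < x₂. -/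
/-! With `t = √(9c₁² − 8b)` the quadratic factors as `4 (x − x₁)(x − x₂)` with `x₁ ≤ x₂`.
Its value at `b` is `9b(b − c₁²) < 0`, because `c₁ ≥ a/2` gives `c₁² ≥ a²/4 > b`; so `b` lies strictly
between the roots. Its value at `0` is `b² > 0`, so `0` lies outside `[x₁, x₂]`, and as `0 < b < x₂`,
this forces `0 < x₁`. -/

section FactoredQuadratic

variable {R : Type*} [CommRing R] [LinearOrder R] [IsStrictOrderedRing R] {a r₁ r₂ x : R}

theorem mul_sub_mul_sub_neg_iff (ha : 0 < a) (hr : r₁ ≤ r₂) :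
    a * (x - r₁) * (x - r₂) < 0 ↔ r₁ < x ∧ x < r₂ := by
  rw [mul_assoc, ← mul_zero a, mul_lt_mul_iff_of_pos_left ha, mul_neg_iff]
  constructor
  · rintro (⟨h₁, h₂⟩ | ⟨h₁, h₂⟩) <;> constructor <;> linarith
  · rintro ⟨h₁, h₂⟩
    exact Or.inl ⟨by linarith, by linarith⟩

theorem mul_sub_mul_sub_pos_iff (ha : 0 < a) (hr : r₁ ≤ r₂) :
    0 < a * (x - r₁) * (x - r₂) ↔ x < r₁ ∨ r₂ < x := by
  rw [mul_assoc, mul_pos_iff_of_pos_left ha, mul_pos_iff]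
  constructor
  · rintro (⟨h₁, h₂⟩ | ⟨h₁, h₂⟩)
    · exact Or.inr (by linarith)
    · exact Or.inl (by linarith)
  · rintro (h | h)
    · exact Or.inr ⟨by linarith, by linarith⟩
    · exact Or.inl ⟨by linarith, by linarith⟩

end FactoredQuadratic

theorem half_add_sqrt_pos {a b : ℝ} (ha : 0 < a) : 0 < a / 2 + √(a ^ 2 / 4 - b) := by
  positivity

theorem lt_sq_half_add_sqrt {a b : ℝ} (ha : 0 < a) (hab : b < a ^ 2 / 4) :
    b < (a / 2 + √(a ^ 2 / 4 - b)) ^ 2 := by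
  have := Real.sqrt_nonneg (a ^ 2 / 4 - b)
  nlinarith

theorem stmt_2 (a b : ℝ) (ha : 0 < a) (hb : 0 < b) (hab : a ^ 2 / 4 > b)
    (c₁ : ℝ) (hc₁ : c₁ = a / 2 + Real.sqrt (a ^ 2 / 4 - b))
    (x₁ x₂ : ℝ)
    (hx₁ : x₁ = (9 * c₁ ^ 2 - 4 * b - 3 * c₁ * Real.sqrt (9 * c₁ ^ 2 - 8 * b)) / 8)
    (hx₂ : x₂ = (9 * c₁ ^ 2 - 4 * b + 3 * c₁ * Real.sqrt (9 * c₁ ^ 2 - 8 * b)) / 8) :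
    4 * x₁ ^ 2 - (9 * c₁ ^ 2 - 4 * b) * x₁ + b ^ 2 = 0 ∧
    4 * x₂ ^ 2 - (9 * c₁ ^ 2 - 4 * b) * x₂ + b ^ 2 = 0 ∧
    0 < x₁ ∧ x₁ < b ∧ b < x₂ := by
  have hc : 0 < c₁ := hc₁ ▸ half_add_sqrt_pos ha
  have hbc : b < c₁ ^ 2 := hc₁ ▸ lt_sq_half_add_sqrt ha hab
  set t := √(9 * c₁ ^ 2 - 8 * b)
  have ht : t ^ 2 = 9 * c₁ ^ 2 - 8 * b := Real.sq_sqrt (by linarith)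
  have hx : x₁ ≤ x₂ := by
    have : 0 ≤ 3 * c₁ * t := by positivity
    linarith
  have factor (x : ℝ) :
      4 * x ^ 2 - (9 * c₁ ^ 2 - 4 * b) * x + b ^ 2 = 4 * (x - x₁) * (x - x₂) := by
    rw [hx₁, hx₂]
    linear_combination (9 * c₁ ^ 2 / 16) * ht
  obtain ⟨hx₁b, hbx₂⟩ : x₁ < b ∧ b < x₂ := by
    rw [← mul_sub_mul_sub_neg_iff four_pos hx, ← factor]
    calc _ = 9 * b * (b - c₁ ^ 2) := by ring
      _ < 0 := mul_neg_of_pos_of_neg (by positivity) (by linarith)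
  have h0_outside : 0 < x₁ ∨ x₂ < 0 := by
    rw [← mul_sub_mul_sub_pos_iff four_pos hx, ← factor]
    simpa using pow_pos hb 2
  exact ⟨by rw [factor]; ring, by rw [factor]; ring,
    h0_outside.resolve_right (by linarith), hx₁b, hbx₂⟩
end

section
/- Let k₂ > 0 and N > 0, and let z₁ be the unique solution of tan z = z/3 in (π, 3π/2) (so sin z₁ < 0). Then the function Φ(p) = p² + k₂·sin(pN)/(pN) satisfies Φ(p) ≥ 0 for all p ∈ ℝ \ {0} if and only if 1/k₂ ≥ −N²·sin(z₁)/z₁³. -/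
/-! With z = pN, Φ(p) = (k₂ z² / N²) · (1 / k₂ - N² g(z)) for g(z) = -sin z / z³, so Φ ≥ 0
on ℝ \ {0} exactly when 1 / k₂ bounds N² g. The function g is even and nonpositive on (0, π].
Its derivative has the numerator 3 sin z - z cos z, which is strictly decreasing on [π, 3π/2] and
vanishes at z₁ (that is what tan z₁ = z₁ / 3 says), so g increases on [π, z₁] and decreases on
[z₁, 2π]. Beyond 2π, g ≤ 1 / (2π)³, which lies below g(z₁) because sin² z₁ ≥ 1 / 2. Hence g
attains its maximum at z₁; evaluating Φ at p = z₁ / N shows the bound is also necessary. -/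

open Real Set

lemma hasDerivAt_three_mul_sin_sub_mul_cos (z : ℝ) :
    HasDerivAt (fun z => 3 * sin z - z * cos z) (2 * cos z + z * sin z) z := by
  refine (((hasDerivAt_sin z).const_mul 3).sub
    ((hasDerivAt_id' z).mul (hasDerivAt_cos z))).congr_deriv ?_
  ring

lemma hasDerivAt_neg_sin_div_pow_three {z : ℝ} (hz : z ≠ 0) :
    HasDerivAt (fun z => -sin z / z ^ 3) ((3 * sin z - z * cos z) / z ^ 4) z := by
  refine ((hasDerivAt_sin z).neg.div (hasDerivAt_pow 3 z) (pow_ne_zero 3 hz)).congr_deriv ?_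
  simp only [Pi.neg_apply]
  field_simp
  ring

lemma neg_sin_div_pow_three_neg (z : ℝ) : -sin (-z) / (-z) ^ 3 = -sin z / z ^ 3 := by
  rw [sin_neg, Odd.neg_pow (by decide), neg_div_neg_eq]

lemma sin_neg_of_pi_lt_of_lt_two_pi {x : ℝ} (h₁ : π < x) (h₂ : x < 2 * π) : sin x < 0 := by
  rw [← sin_sub_two_pi]
  exact sin_neg_of_neg_of_neg_pi_lt (by linarith) (by linarith)

lemma strictAntiOn_three_mul_sin_sub_mul_cos :
    StrictAntiOn (fun z => 3 * sin z - z * cos z) (Icc π (3 * π / 2)) := by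
  refine strictAntiOn_of_hasDerivWithinAt_neg (convex_Icc _ _) (by fun_prop)
    (fun x _ => (hasDerivAt_three_mul_sin_sub_mul_cos x).hasDerivWithinAt) ?_
  simp only [interior_Icc, mem_Ioo]
  rintro x ⟨hπx, hx⟩
  have hs := sin_neg_of_pi_lt_of_lt_two_pi hπx (by linarith)
  have hc : cos x < 0 := cos_neg_of_pi_div_two_lt_of_lt (by linarith) (by linarith)
  nlinarith [pi_pos]

lemma three_mul_sin_sub_mul_cos_nonneg {z₁ x : ℝ} (h₁ : π < z₁) (h₂ : z₁ < 3 * π / 2)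
    (hcrit : 3 * sin z₁ = z₁ * cos z₁) (hx₁ : π ≤ x) (hx₂ : x ≤ z₁) :
    0 ≤ 3 * sin x - x * cos x := by
  have := strictAntiOn_three_mul_sin_sub_mul_cos.antitoneOn ⟨hx₁, by linarith⟩
    ⟨h₁.le, h₂.le⟩ hx₂
  linarith

lemma three_mul_sin_sub_mul_cos_nonpos {z₁ x : ℝ} (h₁ : π < z₁) (h₂ : z₁ < 3 * π / 2)
    (hcrit : 3 * sin z₁ = z₁ * cos z₁) (hx₁ : z₁ ≤ x) (hx₂ : x ≤ 2 * π) :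
    3 * sin x - x * cos x ≤ 0 := by
  rcases le_or_gt x (3 * π / 2) with hx | hx
  · have := strictAntiOn_three_mul_sin_sub_mul_cos.antitoneOn ⟨h₁.le, h₂.le⟩
      ⟨by linarith, hx⟩ hx₁
    linarith
  · have hs : sin x ≤ 0 := by
      rw [← sin_sub_two_pi]
      exact sin_nonpos_of_nonpos_of_neg_pi_le (by linarith) (by linarith)
    have hc : 0 ≤ cos x := by
      rw [← cos_sub_two_pi]
      exact cos_nonneg_of_neg_pi_div_two_le_of_le (by linarith) (by linarith)
    nlinarith [pi_pos]

lemma monotoneOn_neg_sin_div_pow_three {D : Set ℝ} (hD : Convex ℝ D) (h0 : ∀ x ∈ D, x ≠ 0)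
    (hnum : ∀ x ∈ interior D, 0 ≤ 3 * sin x - x * cos x) :
    MonotoneOn (fun z => -sin z / z ^ 3) D :=
  monotoneOn_of_hasDerivWithinAt_nonneg hD
    (fun x hx => (hasDerivAt_neg_sin_div_pow_three (h0 x hx)).continuousAt.continuousWithinAt)
    (fun x hx => (hasDerivAt_neg_sin_div_pow_three (h0 x (interior_subset hx))).hasDerivWithinAt)
    (fun x hx => div_nonneg (hnum x hx) (by positivity))

lemma antitoneOn_neg_sin_div_pow_three {D : Set ℝ} (hD : Convex ℝ D) (h0 : ∀ x ∈ D, x ≠ 0)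
    (hnum : ∀ x ∈ interior D, 3 * sin x - x * cos x ≤ 0) :
    AntitoneOn (fun z => -sin z / z ^ 3) D :=
  antitoneOn_of_hasDerivWithinAt_nonpos hD
    (fun x hx => (hasDerivAt_neg_sin_div_pow_three (h0 x hx)).continuousAt.continuousWithinAt)
    (fun x hx => (hasDerivAt_neg_sin_div_pow_three (h0 x (interior_subset hx))).hasDerivWithinAt)
    (fun x hx => div_nonpos_of_nonpos_of_nonneg (hnum x hx) (by positivity))

lemma neg_sin_div_pow_three_le_one_div_pow {a z : ℝ} (ha : 0 < a) (hz : a ≤ z) :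
    -sin z / z ^ 3 ≤ 1 / a ^ 3 :=
  div_le_div₀ zero_le_one (by linarith [neg_one_le_sin z]) (by positivity)
    (pow_le_pow_left₀ ha.le hz 3)

lemma one_le_two_mul_sin_sq_of_three_mul_sin_eq {z : ℝ} (hz : 3 ≤ z)
    (hcrit : 3 * sin z = z * cos z) : 1 ≤ 2 * sin z ^ 2 := by
  have h9 : 9 * sin z ^ 2 = z ^ 2 * cos z ^ 2 := by
    linear_combination (3 * sin z + z * cos z) * hcrit
  nlinarith [sin_sq_add_cos_sq z, sq_nonneg (cos z)]

lemma neg_sin_div_pow_three_le_of_critical_of_pos {z₁ : ℝ} (h₁ : π < z₁) (h₂ : z₁ < 3 * π / 2)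
    (hcrit : 3 * sin z₁ = z₁ * cos z₁) {z : ℝ} (hz : 0 < z) :
    -sin z / z ^ 3 ≤ -sin z₁ / z₁ ^ 3 := by
  have hz₁ : 0 < z₁ := pi_pos.trans h₁
  have hs₁ : sin z₁ < 0 := sin_neg_of_pi_lt_of_lt_two_pi h₁ (by linarith)
  rcases le_or_gt z π with hzπ | hπz
  · have hs : 0 ≤ sin z := sin_nonneg_of_nonneg_of_le_pi hz.le hzπ
    calc -sin z / z ^ 3 ≤ 0 := div_nonpos_of_nonpos_of_nonneg (by linarith) (by positivity)
      _ ≤ -sin z₁ / z₁ ^ 3 := div_nonneg (by linarith) (by positivity)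
  rcases le_or_gt z z₁ with hzz₁ | hz₁z
  · refine monotoneOn_neg_sin_div_pow_three (convex_Icc π z₁)
      (fun x hx => (pi_pos.trans_le hx.1).ne') (fun x hx => ?_) ⟨hπz.le, hzz₁⟩
      ⟨h₁.le, le_rfl⟩ hzz₁
    rw [interior_Icc] at hx
    exact three_mul_sin_sub_mul_cos_nonneg h₁ h₂ hcrit hx.1.le hx.2.le
  rcases le_or_gt z (2 * π) with hz2π | h2πz
  · refine antitoneOn_neg_sin_div_pow_three (convex_Icc z₁ (2 * π))
      (fun x hx => (hz₁.trans_le hx.1).ne') (fun x hx => ?_) ⟨le_rfl, by linarith⟩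
      ⟨hz₁z.le, hz2π⟩ hz₁z.le
    rw [interior_Icc] at hx
    exact three_mul_sin_sub_mul_cos_nonpos h₁ h₂ hcrit hx.1.le hx.2.le
  have hsin : 27 / 64 ≤ -sin z₁ := by
    nlinarith [one_le_two_mul_sin_sq_of_three_mul_sin_eq (by linarith [pi_gt_three]) hcrit]
  calc -sin z / z ^ 3 ≤ 1 / (2 * π) ^ 3 :=
        neg_sin_div_pow_three_le_one_div_pow (by positivity) h2πz.le
    _ = (27 / 64) / (3 * π / 2) ^ 3 := by field_simp; ring
    _ ≤ -sin z₁ / z₁ ^ 3 := div_le_div₀ (by linarith) hsin (by positivity)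
        (pow_le_pow_left₀ hz₁.le h₂.le 3)

lemma neg_sin_div_pow_three_le_of_critical {z₁ : ℝ} (h₁ : π < z₁) (h₂ : z₁ < 3 * π / 2)
    (hcrit : 3 * sin z₁ = z₁ * cos z₁) {z : ℝ} (hz : z ≠ 0) :
    -sin z / z ^ 3 ≤ -sin z₁ / z₁ ^ 3 := by
  rcases hz.lt_or_gt with hneg | hpos
  · rw [← neg_sin_div_pow_three_neg z]
    exact neg_sin_div_pow_three_le_of_critical_of_pos h₁ h₂ hcrit (neg_pos.2 hneg)
  · exact neg_sin_div_pow_three_le_of_critical_of_pos h₁ h₂ hcrit hpos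

lemma three_mul_sin_eq_mul_cos_of_tan_eq {z : ℝ} (hcos : cos z ≠ 0) (h : tan z = z / 3) :
    3 * sin z = z * cos z := by
  rw [tan_eq_sin_div_cos, div_eq_div_iff hcos three_ne_zero] at h
  linarith

lemma sq_add_mul_sin_div_nonneg_iff {k N p : ℝ} (hk : 0 < k) (hN : N ≠ 0) (hp : p ≠ 0) :
    0 ≤ p ^ 2 + k * sin (p * N) / (p * N) ↔ N ^ 2 * (-sin (p * N) / (p * N) ^ 3) ≤ 1 / k := by
  have hfactor : 0 < k * (p * N) ^ 2 / N ^ 2 := by positivity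
  have hfactorization : p ^ 2 + k * sin (p * N) / (p * N) =
      k * (p * N) ^ 2 / N ^ 2 * (1 / k - N ^ 2 * (-sin (p * N) / (p * N) ^ 3)) := by
    field_simp
    ring
  rw [hfactorization, mul_nonneg_iff_of_pos_left hfactor, sub_nonneg]

theorem stmt_5_general (k₂ N : ℝ) (hk₂ : 0 < k₂) (hN : 0 < N)
    (z₁ : ℝ) (hz₁ : z₁ ∈ Set.Ioo Real.pi (3 * Real.pi / 2))
    (htan : Real.tan z₁ = z₁ / 3) :
    (∀ p : ℝ, p ≠ 0 → 0 ≤ p ^ 2 + k₂ * Real.sin (p * N) / (p * N)) ↔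
      1 / k₂ ≥ -N ^ 2 * Real.sin z₁ / z₁ ^ 3 := by
  obtain ⟨h₁, h₂⟩ := hz₁
  have hcrit : 3 * sin z₁ = z₁ * cos z₁ := three_mul_sin_eq_mul_cos_of_tan_eq
    (cos_neg_of_pi_div_two_lt_of_lt (by linarith [pi_pos]) (by linarith)).ne htan
  have hrhs : -N ^ 2 * sin z₁ / z₁ ^ 3 = N ^ 2 * (-sin z₁ / z₁ ^ 3) := by ring
  rw [ge_iff_le, hrhs]
  constructor
  · intro H
    have hp : z₁ / N ≠ 0 := div_ne_zero (pi_pos.trans h₁).ne' hN.ne'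
    simpa only [div_mul_cancel₀ z₁ hN.ne'] using
      (sq_add_mul_sin_div_nonneg_iff hk₂ hN.ne' hp).1 (H _ hp)
  · intro H p hp
    rw [sq_add_mul_sin_div_nonneg_iff hk₂ hN.ne' hp]
    exact le_trans (mul_le_mul_of_nonneg_left (neg_sin_div_pow_three_le_of_critical h₁ h₂ hcrit
      (mul_ne_zero hp hN.ne')) (sq_nonneg N)) H

theorem stmt_5 (k₂ N : ℝ) (hk₂ : 0 < k₂) (hN : 0 < N)
    (z₁ : ℝ) (hz₁ : z₁ ∈ Set.Ioo Real.pi (3 * Real.pi / 2))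
    (htan : Real.tan z₁ = z₁ / 3)
    (huniq : ∀ z ∈ Set.Ioo Real.pi (3 * Real.pi / 2), Real.tan z = z / 3 → z = z₁) :
    (∀ p : ℝ, p ≠ 0 → 0 ≤ p ^ 2 + k₂ * Real.sin (p * N) / (p * N)) ↔
      1 / k₂ ≥ -N ^ 2 * Real.sin z₁ / z₁ ^ 3 :=
  stmt_5_general k₂ N hk₂ hN z₁ hz₁ htan
end

section
/- Let a, b, d, α > 0 with a²/4 > b, c₁ = a/2 + √(a²/4 − b), and let x* ∈ (0, b) be the unique zero of f(x) = 27c₁²x² − (b + 2x)³ on (0, b). Then the function Φ₁(p₁, p₂) = d·(p₁² + p₂²) + c₁²·α⁴/((p₁² + α²)(p₂² + α²)) − b satisfies Φ₁(p) ≥ 0 for all p = (p₁, p₂) ∈ ℝ² if and only if d ≥ x*/α². -/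
/-!
With `s = p₁² + α²`, `t = p₂² + α²` the symbol is `d(s + t) - 2dα² + c₁²α⁴/(st) - b`, and for fixed
`st = r²` the sum `s + t` is smallest at `s = t = r`; so `Φ₁ ≥ 0` amounts to
`2d(r - α²) + c₁²α⁴/r² - b ≥ 0` for all `r ≥ α²`. By AM-GM, `2r + q³/r² ≥ 3q` with equality at
`r = q`, where `q³ = c₁²α⁴/d`. If `c₁² ≤ dα²` the minimum over `r ≥ α²` is at `r = α²`, with
value `c₁² - b > 0`; otherwise it is at `r = q > α²`, with value `3dq - 2dα² - b`, and
`(3dq)³ = 27c₁²(dα²)²` makes its sign that of `f(dα²)`. Finally `f` is negative on `(0, x*)`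
and nonnegative on `[x*, c₁²)`.
-/

open Set

lemma lt_sq_larger_root {a b : ℝ} (ha : 0 ≤ a) (hab : b < a ^ 2 / 4) :
    b < (a / 2 + Real.sqrt (a ^ 2 / 4 - b)) ^ 2 := by
  have hs := Real.sqrt_nonneg (a ^ 2 / 4 - b)
  have hsq := Real.sq_sqrt (sub_nonneg.2 hab.le)
  nlinarith [mul_nonneg ha hs]

lemma neg_iff_lt_of_unique_root {F : ℝ → ℝ} {a b z x : ℝ} (hF : ContinuousOn F (Icc a b))
    (ha : F a < 0) (hb : 0 < F b) (huniq : ∀ y ∈ Ioo a b, F y = 0 → y = z) (hx : x ∈ Ioo a b) :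
    F x < 0 ↔ x < z := by
  constructor
  · intro hFx
    obtain ⟨y, hy, hFy⟩ := intermediate_value_Ioo hx.2.le (hF.mono (Icc_subset_Icc hx.1.le le_rfl))
      ⟨hFx, hb⟩
    exact huniq y ⟨hx.1.trans hy.1, hy.2⟩ hFy ▸ hy.1
  · intro hxz
    by_contra! hFx
    rcases hFx.eq_or_lt with hFx | hFx
    · exact hxz.ne (huniq x hx hFx.symm)
    obtain ⟨y, hy, hFy⟩ := intermediate_value_Ioo hx.1.le (hF.mono (Icc_subset_Icc le_rfl hx.2.le))
      ⟨ha, hFx⟩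
    exact (hy.2.trans hxz).ne (huniq y ⟨hy.1, hy.2.trans hx.2⟩ hFy)

lemma three_mul_le_two_mul_add_cube_div_sq {q r : ℝ} (hq : 0 ≤ q) (hr : 0 < r) :
    3 * q ≤ 2 * r + q ^ 3 / r ^ 2 := by
  rw [← sub_nonneg]
  have key : 2 * r + q ^ 3 / r ^ 2 - 3 * q = (r - q) ^ 2 * (2 * r + q) / r ^ 2 := by
    field_simp
    ring
  rw [key]
  positivity

lemma forall_symbol_nonneg_iff_radial {d κ β b : ℝ} (hd : 0 ≤ d) (hβ : 0 < β) :
    (∀ p₁ p₂ : ℝ, 0 ≤ d * (p₁ ^ 2 + p₂ ^ 2) + κ / ((p₁ ^ 2 + β) * (p₂ ^ 2 + β)) - b) ↔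
      ∀ r, β ≤ r → 0 ≤ 2 * d * (r - β) + κ / r ^ 2 - b := by
  constructor
  · intro h r hr
    have := h (Real.sqrt (r - β)) (Real.sqrt (r - β))
    rw [Real.sq_sqrt (sub_nonneg.2 hr), sub_add_cancel, ← sq] at this
    linarith
  · intro h p₁ p₂
    set s := p₁ ^ 2 + β
    set t := p₂ ^ 2 + β
    have hs : β ≤ s := le_add_of_nonneg_left (sq_nonneg p₁)
    have ht : β ≤ t := le_add_of_nonneg_left (sq_nonneg p₂)
    have hst : Real.sqrt (s * t) ^ 2 = s * t := Real.sq_sqrt (by positivity)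
    have hβr : β ≤ Real.sqrt (s * t) :=
      Real.le_sqrt_of_sq_le (by nlinarith [mul_le_mul hs ht hβ.le (hβ.le.trans hs)])
    have hsum : 2 * Real.sqrt (s * t) ≤ s + t := by
      rw [Real.sqrt_mul (hβ.le.trans hs)]
      nlinarith [sq_nonneg (Real.sqrt s - Real.sqrt t), Real.sq_sqrt (hβ.le.trans hs),
        Real.sq_sqrt (hβ.le.trans ht)]
    have := h _ hβr
    rw [hst] at this
    have hp : p₁ ^ 2 + p₂ ^ 2 = s + t - 2 * β := by simp only [s, t]; ring
    rw [hp]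
    nlinarith [mul_le_mul_of_nonneg_left hsum hd]

lemma forall_radial_nonneg_iff {d β b c : ℝ} (hd : 0 < d) (hβ : 0 < β) (hbc : b < c ^ 2) :
    (∀ r, β ≤ r → 0 ≤ 2 * d * (r - β) + c ^ 2 * β ^ 2 / r ^ 2 - b) ↔
      c ^ 2 ≤ d * β ∨ (b + 2 * (d * β)) ^ 3 ≤ 27 * c ^ 2 * (d * β) ^ 2 := by
  obtain ⟨q, hq, hdq⟩ : ∃ q, 0 ≤ q ∧ d * q ^ 3 = c ^ 2 * β ^ 2 := by
    refine ⟨(c ^ 2 * β ^ 2 / d) ^ ((3 : ℕ)⁻¹ : ℝ), by positivity, ?_⟩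
    rw [Real.rpow_inv_natCast_pow (by positivity) three_ne_zero]
    field_simp
  have hcube : (3 * d * q) ^ 3 = 27 * c ^ 2 * (d * β) ^ 2 := by
    linear_combination 27 * d ^ 2 * hdq
  have hprofile : ∀ r, 0 < r → 2 * d * (r - β) + c ^ 2 * β ^ 2 / r ^ 2 - b =
      d * (2 * r + q ^ 3 / r ^ 2) - 2 * (d * β) - b := by
    intro r hr
    rw [← hdq]
    field_simp
    ring
  have hF : (b + 2 * (d * β)) ^ 3 ≤ 27 * c ^ 2 * (d * β) ^ 2 ↔ b + 2 * (d * β) ≤ 3 * d * q := by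
    rw [← hcube]
    exact Odd.pow_le_pow (by decide)
  rw [hF]
  constructor
  · intro h
    by_contra! hlt
    obtain ⟨hdβc, hlt⟩ := hlt
    have hβq : β < q := by
      refine lt_of_pow_lt_pow_left₀ 3 hq (lt_of_mul_lt_mul_left ?_ hd.le)
      rw [hdq]
      nlinarith [pow_pos hβ 2]
    have hmin := h q hβq.le
    rw [hprofile q (hβ.trans hβq)] at hmin
    have hqq : q ^ 3 / q ^ 2 = q := by field_simp
    nlinarith
  · rintro (hcd | hF) r hr
    · have hr0 : 0 < r := hβ.trans_le hr
      set u := c ^ 2 / β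
      have huβ : u * β = c ^ 2 := div_mul_cancel₀ _ hβ.ne'
      have hud : u ≤ d := (div_le_iff₀ hβ).2 hcd
      have hsplit : c ^ 2 * β ^ 2 / r ^ 2 = u * (β ^ 3 / r ^ 2) := by
        rw [← huβ]
        ring
      rw [hsplit]
      nlinarith [mul_le_mul_of_nonneg_left (three_mul_le_two_mul_add_cube_div_sq hβ.le hr0)
        (div_nonneg (sq_nonneg c) hβ.le), mul_le_mul_of_nonneg_right hud (sub_nonneg.2 hr)]
    · rw [hprofile r (hβ.trans_le hr)]
      nlinarith [mul_le_mul_of_nonneg_left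
        (three_mul_le_two_mul_add_cube_div_sq hq (hβ.trans_le hr)) hd.le]

lemma larger_or_cubic_nonneg_iff_root_le {b c xs x : ℝ} (hb : 0 < b) (hbc : b < c ^ 2)
    (hxs : xs ∈ Ioo 0 b)
    (huniq : ∀ y ∈ Ioo (0 : ℝ) b, 27 * c ^ 2 * y ^ 2 - (b + 2 * y) ^ 3 = 0 → y = xs)
    (hx : 0 < x) :
    c ^ 2 ≤ x ∨ (b + 2 * x) ^ 3 ≤ 27 * c ^ 2 * x ^ 2 ↔ xs ≤ x := by
  rcases lt_or_ge x b with hxb | hbx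
  · have hroot : 27 * c ^ 2 * x ^ 2 - (b + 2 * x) ^ 3 < 0 ↔ x < xs :=
      neg_iff_lt_of_unique_root (F := fun y => 27 * c ^ 2 * y ^ 2 - (b + 2 * y) ^ 3)
        (by fun_prop) (by nlinarith [pow_pos hb 3]) (by nlinarith [pow_pos hb 2]) huniq ⟨hx, hxb⟩
    simp only [not_le.2 (hxb.trans hbc), false_or]
    rw [← sub_nonneg, ← not_lt, hroot, not_lt]
  · refine iff_of_true ?_ (hxs.2.le.trans hbx)
    refine (le_or_gt (c ^ 2) x).imp_right fun hxc => ?_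
    calc (b + 2 * x) ^ 3 ≤ (3 * x) ^ 3 := by gcongr; linarith
      _ = 27 * x * x ^ 2 := by ring
      _ ≤ 27 * c ^ 2 * x ^ 2 := by gcongr

theorem stmt_9_general (a b d α : ℝ) (ha : 0 < a) (hb : 0 < b) (hd : 0 < d) (hα : 0 < α)
    (hab : a ^ 2 / 4 > b)
    (c₁ : ℝ) (hc₁ : c₁ = a / 2 + Real.sqrt (a ^ 2 / 4 - b))
    (xs : ℝ) (hxs : xs ∈ Set.Ioo (0 : ℝ) b)
    (huniq : ∀ x ∈ Set.Ioo (0 : ℝ) b,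
      27 * c₁ ^ 2 * x ^ 2 - (b + 2 * x) ^ 3 = 0 → x = xs) :
    (∀ p₁ p₂ : ℝ,
        0 ≤ d * (p₁ ^ 2 + p₂ ^ 2) +
            c₁ ^ 2 * α ^ 4 / ((p₁ ^ 2 + α ^ 2) * (p₂ ^ 2 + α ^ 2)) - b) ↔
      d ≥ xs / α ^ 2 := by
  have hbc : b < c₁ ^ 2 := hc₁ ▸ lt_sq_larger_root ha.le hab
  have hα4 : α ^ 4 = (α ^ 2) ^ 2 := by ring
  rw [forall_symbol_nonneg_iff_radial hd.le (by positivity), hα4,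
    forall_radial_nonneg_iff hd (by positivity) hbc, ge_iff_le, div_le_iff₀ (by positivity)]
  exact larger_or_cubic_nonneg_iff_root_le hb hbc hxs huniq (by positivity)

theorem stmt_9 (a b d α : ℝ) (ha : 0 < a) (hb : 0 < b) (hd : 0 < d) (hα : 0 < α)
    (hab : a ^ 2 / 4 > b)
    (c₁ : ℝ) (hc₁ : c₁ = a / 2 + Real.sqrt (a ^ 2 / 4 - b))
    (xs : ℝ) (hxs : xs ∈ Set.Ioo (0 : ℝ) b)
    (hzero : 27 * c₁ ^ 2 * xs ^ 2 - (b + 2 * xs) ^ 3 = 0)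
    (huniq : ∀ x ∈ Set.Ioo (0 : ℝ) b,
      27 * c₁ ^ 2 * x ^ 2 - (b + 2 * x) ^ 3 = 0 → x = xs) :
    (∀ p₁ p₂ : ℝ,
        0 ≤ d * (p₁ ^ 2 + p₂ ^ 2) +
            c₁ ^ 2 * α ^ 4 / ((p₁ ^ 2 + α ^ 2) * (p₂ ^ 2 + α ^ 2)) - b) ↔
      d ≥ xs / α ^ 2 :=
  stmt_9_general a b d α ha hb hd hα hab c₁ hc₁ xs hxs huniq
end

section
/- Let a, d, α > 0. Then the function Φ(p₁, p₂) = d·(p₁² + p₂²) + (a²/4)·α⁴/((p₁² + α²)(p₂² + α²)) − a²/4 satisfies Φ(p) ≥ 0 for all p = (p₁, p₂) ∈ ℝ² if and only if d ≥ a²/(4α²). Moreover, if 0 < d < a²/(4α²), then there exists q > 0 such that Φ(√q, √q) < 0. -/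
/-!
With `x = p₁²`, `y = p₂²`, `s = α²` and `K = a²/4` the symbol is
`d (x + y) - K (1 - s² / ((x + s)(y + s)))`, and `1 - s² / ((x + s)(y + s)) ≤ (x + y) / s`,
so `Φ ≥ 0` as soon as `K ≤ d s`. Conversely, on the diagonal
`Φ(q, q) = q (2d - K (q + 2s) / (q + s)²)`, whose second factor tends to `2 (d s - K) / s`
as `q → 0`; hence `Φ` takes negative values near the origin when `d s < K`.
-/

open Filter Topology

/-- `Φ` in the variables `x = p₁²`, `y = p₂²`, with `K = a²/4`. -/
noncomputable def fourierSymbol (d K α x y : ℝ) : ℝ :=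
  d * (x + y) + K * α ^ 4 / ((x + α ^ 2) * (y + α ^ 2)) - K

lemma one_sub_sq_div_mul_le_add_div {s x y : ℝ} (hs : 0 < s) (hx : 0 ≤ x) (hy : 0 ≤ y) :
    1 - s ^ 2 / ((x + s) * (y + s)) ≤ (x + y) / s := by
  rw [sub_le_iff_le_add, div_add_div _ _ hs.ne' (by positivity), le_div_iff₀ (by positivity)]
  nlinarith [mul_nonneg (mul_nonneg hx hy) (add_nonneg hx hy),
    mul_nonneg hs.le (mul_nonneg hx hy), mul_nonneg hs.le (sq_nonneg x),
    mul_nonneg hs.le (sq_nonneg y)]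

lemma fourierSymbol_nonneg {d K α x y : ℝ} (hα : α ≠ 0) (hK : 0 ≤ K) (hKd : K ≤ d * α ^ 2)
    (hx : 0 ≤ x) (hy : 0 ≤ y) : 0 ≤ fourierSymbol d K α x y := by
  have hs : 0 < α ^ 2 := by positivity
  have hbound := one_sub_sq_div_mul_le_add_div hs hx hy
  calc 0 ≤ d * (x + y) - K * (x + y) / α ^ 2 := by
        rw [sub_nonneg, div_le_iff₀ hs]; nlinarith [add_nonneg hx hy]
    _ ≤ d * (x + y) - K * (1 - (α ^ 2) ^ 2 / ((x + α ^ 2) * (y + α ^ 2))) := by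
        rw [mul_div_assoc]; gcongr
    _ = fourierSymbol d K α x y := by unfold fourierSymbol; ring

lemma fourierSymbol_diag_eq {d K α q : ℝ} (h : q + α ^ 2 ≠ 0) :
    fourierSymbol d K α q q = q * (2 * d - K * (q + 2 * α ^ 2) / (q + α ^ 2) ^ 2) := by
  unfold fourierSymbol
  field_simp
  ring

lemma exists_fourierSymbol_diag_neg {d K α : ℝ} (hα : α ≠ 0) (hKd : d * α ^ 2 < K) :
    ∃ q, 0 < q ∧ fourierSymbol d K α q q < 0 := by
  have hs : 0 < α ^ 2 := by positivity
  set g : ℝ → ℝ := fun q ↦ 2 * d - K * (q + 2 * α ^ 2) / (q + α ^ 2) ^ 2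
  have hg : ContinuousAt g 0 := by
    apply ContinuousAt.sub continuousAt_const
    apply ContinuousAt.div (by fun_prop) (by fun_prop)
    simp [hα]
  have hg0 : g 0 < 0 := by
    have : g 0 = 2 * (d * α ^ 2 - K) / α ^ 2 := by simp only [g]; field_simp; ring
    rw [this]; exact div_neg_of_neg_of_pos (by linarith) hs
  obtain ⟨q, hgq, hq⟩ := ((eventually_nhdsWithin_of_eventually_nhds
    (hg.eventually (gt_mem_nhds hg0))).and (self_mem_nhdsWithin (s := Set.Ioi 0))).exists
  refine ⟨q, hq, ?_⟩
  rw [fourierSymbol_diag_eq (by positivity)]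
  exact mul_neg_of_pos_of_neg hq hgq

theorem stmt_11_general (a d α : ℝ) (hα : 0 < α) :
    ((∀ p₁ p₂ : ℝ,
        0 ≤ d * (p₁ ^ 2 + p₂ ^ 2) +
            a ^ 2 / 4 * α ^ 4 / ((p₁ ^ 2 + α ^ 2) * (p₂ ^ 2 + α ^ 2)) - a ^ 2 / 4) ↔
      d ≥ a ^ 2 / (4 * α ^ 2)) ∧
    (d < a ^ 2 / (4 * α ^ 2) → ∃ q : ℝ, 0 < q ∧
      d * (Real.sqrt q ^ 2 + Real.sqrt q ^ 2) +
          a ^ 2 / 4 * α ^ 4 /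
            ((Real.sqrt q ^ 2 + α ^ 2) * (Real.sqrt q ^ 2 + α ^ 2)) - a ^ 2 / 4 < 0) := by
  have hthreshold : a ^ 2 / (4 * α ^ 2) ≤ d ↔ a ^ 2 / 4 ≤ d * α ^ 2 := by
    rw [div_le_iff₀ (by positivity), div_le_iff₀ four_pos]; ring_nf
  have unstable (hlt : d < a ^ 2 / (4 * α ^ 2)) : ∃ q : ℝ, 0 < q ∧
      fourierSymbol d (a ^ 2 / 4) α (Real.sqrt q ^ 2) (Real.sqrt q ^ 2) < 0 := by
    have hlt' : d * α ^ 2 < a ^ 2 / 4 := lt_of_not_ge fun h ↦ hlt.not_ge (hthreshold.mpr h)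
    obtain ⟨q, hq, hneg⟩ := exists_fourierSymbol_diag_neg hα.ne' hlt'
    exact ⟨q, hq, by rwa [Real.sq_sqrt hq.le]⟩
  refine ⟨⟨fun hnonneg ↦ ?_, fun hge p₁ p₂ ↦ ?_⟩, unstable⟩
  · by_contra hlt
    obtain ⟨q, -, hneg⟩ := unstable (not_le.mp hlt)
    exact hneg.not_ge (hnonneg _ _)
  · exact fourierSymbol_nonneg hα.ne' (by positivity) (hthreshold.mp hge)
      (sq_nonneg _) (sq_nonneg _)

theorem stmt_11 (a d α : ℝ) (ha : 0 < a) (hd : 0 < d) (hα : 0 < α) :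
    ((∀ p₁ p₂ : ℝ,
        0 ≤ d * (p₁ ^ 2 + p₂ ^ 2) +
            a ^ 2 / 4 * α ^ 4 / ((p₁ ^ 2 + α ^ 2) * (p₂ ^ 2 + α ^ 2)) - a ^ 2 / 4) ↔
      d ≥ a ^ 2 / (4 * α ^ 2)) ∧
    (d < a ^ 2 / (4 * α ^ 2) → ∃ q : ℝ, 0 < q ∧
      d * (Real.sqrt q ^ 2 + Real.sqrt q ^ 2) +
          a ^ 2 / 4 * α ^ 4 /
            ((Real.sqrt q ^ 2 + α ^ 2) * (Real.sqrt q ^ 2 + α ^ 2)) - a ^ 2 / 4 < 0) :=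
  stmt_11_general a d α hα
end

section
/- Let n ∈ ℕ, n ≥ 1, let a, b, d, α > 0 with a²/4 > b, c₁ = a/2 + √(a²/4 − b), and let s₀ = s₀(a, b) ∈ (0, 1) be the unique zero of g(s) = −s·ln s + s − b/c₁² on (0, 1). Then the function Φ₁(p) = d·|p|² + c₁²·e^{−|p|²/(4α)} − b on ℝⁿ satisfies Φ₁(p) ≥ 0 for all p ∈ ℝⁿ if and only if d ≥ s₀·c₁²/(4α). -/
open Real

lemma strictMonoOn_add_negMulLog : StrictMonoOn (fun s : ℝ => s + negMulLog s) (Set.Icc 0 1) := by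
  refine strictMonoOn_of_deriv_pos (convex_Icc 0 1) (by fun_prop) fun x hx => ?_
  rw [interior_Icc] at hx
  have hderiv : HasDerivAt (fun s => s + negMulLog s) (1 + (-log x - 1)) x :=
    (hasDerivAt_id x).add (hasDerivAt_negMulLog hx.1.ne')
  rw [hderiv.deriv]
  linarith [log_neg hx.1 hx.2]

/-- `1 + v ≤ exp v` at `v = -u - log s`. -/
lemma add_negMulLog_le_mul_add_exp_neg {s : ℝ} (hs : 0 < s) (u : ℝ) :
    s + negMulLog s ≤ s * u + exp (-u) := by
  have htangent := add_one_le_exp (-u - log s)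
  rw [exp_sub, exp_log hs, le_div_iff₀ hs] at htangent
  rw [negMulLog]
  linarith

lemma mul_neg_log_add_exp_neg_neg_log {s : ℝ} (hs : 0 < s) :
    s * -log s + exp (-(-log s)) = s + negMulLog s := by
  rw [neg_neg, exp_log hs, negMulLog]
  ring

/-- With `s = β d / κ` and `u = t / β` the function becomes `κ (s u + exp (-u)) - b`; by the
tangent-line bound its infimum over `u ≥ 0` is `κ (s + negMulLog s) - b` when `s ≤ 1`. -/
theorem forall_nonneg_mul_add_exp_neg_iff {κ b d β s₀ : ℝ} (hκ : 0 < κ) (hd : 0 < d) (hβ : 0 < β)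
    (hs₀ : s₀ ∈ Set.Ioo 0 1) (hb : κ * (s₀ + negMulLog s₀) = b) :
    (∀ t, 0 ≤ t → 0 ≤ d * t + κ * exp (-t / β) - b) ↔ s₀ * κ / β ≤ d := by
  set s := β * d / κ with hs_def
  have hrescale (t : ℝ) : d * t + κ * exp (-t / β) = κ * (s * (t / β) + exp (-(t / β))) := by
    rw [hs_def, neg_div]
    field_simp
  have hthreshold : s₀ * κ / β ≤ d ↔ s₀ ≤ s := by
    rw [hs_def, le_div_iff₀ hκ, div_le_iff₀ hβ, mul_comm d]
  simp only [hrescale, hthreshold]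
  constructor
  · intro hall
    by_contra! hss₀
    have hs : 0 < s := by positivity
    have hlog : log s < 0 := log_neg hs (hss₀.trans hs₀.2)
    have hlt_b : κ * (s + negMulLog s) < b :=
      hb ▸ mul_lt_mul_of_pos_left (strictMonoOn_add_negMulLog ⟨hs.le, by linarith [hs₀.2]⟩
        ⟨hs₀.1.le, hs₀.2.le⟩ hss₀) hκ
    have hval := hall (β * -log s) (by nlinarith)
    rw [mul_div_cancel_left₀ _ hβ.ne', mul_neg_log_add_exp_neg_neg_log hs] at hval
    linarith
  · intro hs₀s t ht
    have hu : 0 ≤ t / β := by positivity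
    have hmin := add_negMulLog_le_mul_add_exp_neg hs₀.1 (t / β)
    have hslope := mul_le_mul_of_nonneg_right hs₀s hu
    nlinarith

lemma forall_norm_sq_iff {E : Type*} [NormedAddCommGroup E] [NormedSpace ℝ E] [Nontrivial E]
    (Q : ℝ → Prop) : (∀ p : E, Q (‖p‖ ^ 2)) ↔ ∀ t, 0 ≤ t → Q t := by
  refine ⟨fun h t ht => ?_, fun h p => h _ (by positivity)⟩
  obtain ⟨p, hp⟩ := exists_norm_eq E (sqrt_nonneg t)
  simpa [hp, sq_sqrt ht] using h p

theorem stmt_12_general (n : ℕ) (hn : 1 ≤ n)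
    (a b d α : ℝ) (ha : 0 < a) (hd : 0 < d) (hα : 0 < α)
    (c₁ : ℝ) (hc₁ : c₁ = a / 2 + Real.sqrt (a ^ 2 / 4 - b))
    (s₀ : ℝ) (hs₀ : s₀ ∈ Set.Ioo (0 : ℝ) 1)
    (hzero : -s₀ * Real.log s₀ + s₀ - b / c₁ ^ 2 = 0) :
    (∀ p : EuclideanSpace ℝ (Fin n),
        0 ≤ d * ‖p‖ ^ 2 + c₁ ^ 2 * Real.exp (-‖p‖ ^ 2 / (4 * α)) - b) ↔
      d ≥ s₀ * c₁ ^ 2 / (4 * α) := by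
  have : NeZero n := ⟨by omega⟩
  have hc₁_pos : 0 < c₁ ^ 2 := by rw [hc₁]; positivity
  have hb_eq : c₁ ^ 2 * (s₀ + negMulLog s₀) = b := by
    have hh : s₀ + negMulLog s₀ = b / c₁ ^ 2 := by rw [negMulLog]; linarith
    rw [hh, mul_div_cancel₀ _ hc₁_pos.ne']
  rw [forall_norm_sq_iff (fun t => 0 ≤ d * t + c₁ ^ 2 * exp (-t / (4 * α)) - b), ge_iff_le]
  exact forall_nonneg_mul_add_exp_neg_iff hc₁_pos hd (by positivity) hs₀ hb_eq

theorem stmt_12 (n : ℕ) (hn : 1 ≤ n)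
    (a b d α : ℝ) (ha : 0 < a) (hb : 0 < b) (hd : 0 < d) (hα : 0 < α)
    (hab : a ^ 2 / 4 > b)
    (c₁ : ℝ) (hc₁ : c₁ = a / 2 + Real.sqrt (a ^ 2 / 4 - b))
    (s₀ : ℝ) (hs₀ : s₀ ∈ Set.Ioo (0 : ℝ) 1)
    (hzero : -s₀ * Real.log s₀ + s₀ - b / c₁ ^ 2 = 0)
    (huniq : ∀ s ∈ Set.Ioo (0 : ℝ) 1,
      -s * Real.log s + s - b / c₁ ^ 2 = 0 → s = s₀) :
    (∀ p : EuclideanSpace ℝ (Fin n),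
        0 ≤ d * ‖p‖ ^ 2 + c₁ ^ 2 * Real.exp (-‖p‖ ^ 2 / (4 * α)) - b) ↔
      d ≥ s₀ * c₁ ^ 2 / (4 * α) :=
  stmt_12_general n hn a b d α ha hd hα c₁ hc₁ s₀ hs₀ hzero
end

section
/- Let n ∈ ℕ, n ≥ 1, and b, d, α > 0. Then the function Φ(p) = d·|p|² + b·e^{−|p|²/(4α)} − b on ℝⁿ satisfies Φ(p) ≥ 0 for all p ∈ ℝⁿ if and only if d ≥ b/(4α). Moreover, if 0 < d < b/(4α), then Φ(p) < 0 for all p ≠ 0 with |p| sufficiently small. -/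
/-!
Writing `t = ‖p‖²`, the symbol is the radial profile `d t + b (e^{-t/(4α)} - 1)`, which vanishes at
`t = 0` with slope `d - b/(4α)` there. Since `t ↦ e^{-t/(4α)}` is convex, its tangent line
`1 - t/(4α)` lies below it, so the profile is nonnegative as soon as the slope is. Conversely, the
second-order bound `e^x ≤ 1 + x + x²` for `|x| ≤ 1` shows that a negative slope makes the profile
negative on a punctured neighbourhood of `0`, and such small values of `t` are norms squared of
nonzero vectors because `n ≥ 1`.
-/

open Real

noncomputable def symbolProfile (b d α t : ℝ) : ℝ :=
  d * t + b * exp (-t / (4 * α)) - b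

section SymbolProfile

variable {b d α : ℝ}

theorem symbolProfile_nonneg (hb : 0 ≤ b) (hd : b / (4 * α) ≤ d) {t : ℝ}
    (ht : 0 ≤ t) : 0 ≤ symbolProfile b d α t := by
  have htangent : b * (1 - t / (4 * α)) ≤ b * exp (-t / (4 * α)) := by
    refine mul_le_mul_of_nonneg_left ?_ hb
    linarith [add_one_le_exp (-t / (4 * α)), neg_div (4 * α) t]
  have hslope : b / (4 * α) * t ≤ d * t := mul_le_mul_of_nonneg_right hd ht
  have hexpand : b * (1 - t / (4 * α)) = b - b / (4 * α) * t := by ring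
  unfold symbolProfile
  linarith

theorem exists_symbolProfile_neg (hb : 0 < b) (hα : 0 < α) (hd : d < b / (4 * α)) :
    ∃ δ > 0, ∀ t, 0 < t → t < δ → symbolProfile b d α t < 0 := by
  set ε := b / (4 * α) - d with hε_def
  have hε : 0 < ε := sub_pos.2 hd
  have h4α : 0 < 4 * α := by positivity
  refine ⟨min (4 * α) (ε * (4 * α) ^ 2 / b), lt_min h4α (by positivity), fun t ht htδ => ?_⟩
  set x := -t / (4 * α) with hx_def
  have hx : |x| ≤ 1 := by
    rw [hx_def, neg_div, abs_neg, abs_div, abs_of_pos ht, abs_of_pos h4α, div_le_one h4α]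
    exact (htδ.trans_le (min_le_left _ _)).le
  have hexp : exp x ≤ 1 + x + x ^ 2 := by
    linarith [le_of_abs_le (abs_exp_sub_one_sub_id_le hx)]
  -- The quadratic error `b x²` is dominated by the linear gain `ε t` once `t < ε (4α)² / b`.
  have hquad : b * x ^ 2 < ε * t := by
    have hbt : b * t / (4 * α) ^ 2 < ε := by
      rw [div_lt_iff₀ (by positivity)]
      exact (lt_div_iff₀' hb).1 (htδ.trans_le (min_le_right _ _))
    calc b * x ^ 2 = b * t / (4 * α) ^ 2 * t := by rw [hx_def]; field_simp
      _ < ε * t := mul_lt_mul_of_pos_right hbt ht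
  calc symbolProfile b d α t = d * t + b * exp x - b := rfl
    _ ≤ d * t + b * (1 + x + x ^ 2) - b := by gcongr
    _ = -ε * t + b * x ^ 2 := by rw [hε_def, hx_def]; field_simp; ring
    _ < 0 := by nlinarith

end SymbolProfile

theorem stmt_14_general (n : ℕ) (hn : 1 ≤ n) (b d α : ℝ) (hb : 0 < b) (hα : 0 < α) :
    ((∀ p : EuclideanSpace ℝ (Fin n),
        0 ≤ d * ‖p‖ ^ 2 + b * Real.exp (-‖p‖ ^ 2 / (4 * α)) - b) ↔
      d ≥ b / (4 * α)) ∧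
    (d < b / (4 * α) → ∃ δ > 0, ∀ p : EuclideanSpace ℝ (Fin n), p ≠ 0 → ‖p‖ < δ →
      d * ‖p‖ ^ 2 + b * Real.exp (-‖p‖ ^ 2 / (4 * α)) - b < 0) := by
  have hsmall : d < b / (4 * α) → ∃ δ > 0, ∀ p : EuclideanSpace ℝ (Fin n), p ≠ 0 → ‖p‖ < δ →
      d * ‖p‖ ^ 2 + b * Real.exp (-‖p‖ ^ 2 / (4 * α)) - b < 0 := by
    intro hd
    obtain ⟨δ, hδ, hneg⟩ := exists_symbolProfile_neg hb hα hd
    exact ⟨√δ, sqrt_pos.2 hδ, fun p hp hpδ =>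
      hneg _ (by positivity) ((lt_sqrt (norm_nonneg p)).1 hpδ)⟩
  refine ⟨⟨fun hΦ => ?_, fun hd p => symbolProfile_nonneg hb.le hd (sq_nonneg ‖p‖)⟩, hsmall⟩
  by_contra! hd
  obtain ⟨δ, hδ, hneg⟩ := hsmall hd
  have : Nonempty (Fin n) := ⟨⟨0, hn⟩⟩
  obtain ⟨p, hp⟩ := exists_norm_eq (EuclideanSpace ℝ (Fin n)) (half_pos hδ).le
  have hp0 : p ≠ 0 := norm_ne_zero_iff.1 (hp ▸ (half_pos hδ).ne')
  exact (hneg p hp0 (hp ▸ half_lt_self hδ)).not_ge (hΦ p)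

theorem stmt_14 (n : ℕ) (hn : 1 ≤ n) (b d α : ℝ) (hb : 0 < b) (hd : 0 < d) (hα : 0 < α) :
    ((∀ p : EuclideanSpace ℝ (Fin n),
        0 ≤ d * ‖p‖ ^ 2 + b * Real.exp (-‖p‖ ^ 2 / (4 * α)) - b) ↔
      d ≥ b / (4 * α)) ∧
    (d < b / (4 * α) → ∃ δ > 0, ∀ p : EuclideanSpace ℝ (Fin n), p ≠ 0 → ‖p‖ < δ →
      d * ‖p‖ ^ 2 + b * Real.exp (-‖p‖ ^ 2 / (4 * α)) - b < 0) :=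
  stmt_14_general n hn b d α hb hα
end

section
/- Let a, d, α > 0. Then the function Φ(p) = d·|p|² + (a²/4)·α⁴/(α² + |p|²)² − a²/4 on ℝ³ satisfies Φ(p) ≥ 0 for all p ∈ ℝ³ if and only if d ≥ a²/(2α²). Moreover, if 0 < d < a²/(2α²), then Φ(p) < 0 for all p ≠ 0 with |p| sufficiently small. -/
open Filter Topology

/-
With t = |p|², Φ = t · N(t) / (α² + t)² where N(t) = d (α² + t)² − (a²/4)(2α² + t).
If 2α²d ≥ a² then d ≥ 0 and
4N(t) = (2α²d − a²)(2α² + t) + d(6α²t + 4t²) ≥ 0, so Φ ≥ 0. If 2α²d < a² then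
N(0) = α²(α²d − a²/2) < 0, so by continuity N, and hence Φ, is negative for small t > 0.
-/

noncomputable def radialSymbol (a d α r : ℝ) : ℝ :=
  d * r ^ 2 + a ^ 2 / 4 * α ^ 4 / (α ^ 2 + r ^ 2) ^ 2 - a ^ 2 / 4

theorem radialSymbol_eq_mul_div {a d α : ℝ} (hα : 0 < α) (r : ℝ) :
    radialSymbol a d α r = r ^ 2 * (d * (α ^ 2 + r ^ 2) ^ 2 - a ^ 2 / 4 * (2 * α ^ 2 + r ^ 2))
      / (α ^ 2 + r ^ 2) ^ 2 := by
  have : α ^ 2 + r ^ 2 ≠ 0 := by positivity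
  unfold radialSymbol
  field_simp
  ring

theorem radialSymbol_nonneg {a d α : ℝ} (hα : 0 < α) (hd : a ^ 2 / (2 * α ^ 2) ≤ d) (r : ℝ) :
    0 ≤ radialSymbol a d α r := by
  have hd' : a ^ 2 ≤ 2 * α ^ 2 * d := by rwa [div_le_iff₀' (by positivity)] at hd
  have hnum : 0 ≤ d * (α ^ 2 + r ^ 2) ^ 2 - a ^ 2 / 4 * (2 * α ^ 2 + r ^ 2) := by
    have hd0 : 0 ≤ d := nonneg_of_mul_nonneg_right (by nlinarith) (by positivity : 0 < 2 * α ^ 2)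
    nlinarith [mul_nonneg (sub_nonneg.2 hd') (by positivity : 0 ≤ 2 * α ^ 2 + r ^ 2),
      mul_nonneg hd0 (by positivity : 0 ≤ 3 / 2 * α ^ 2 * r ^ 2 + r ^ 4)]
  rw [radialSymbol_eq_mul_div hα]
  positivity

theorem eventually_radialSymbol_neg {a d α : ℝ} (hα : 0 < α) (hd : d < a ^ 2 / (2 * α ^ 2)) :
    ∀ᶠ r in 𝓝[≠] 0, radialSymbol a d α r < 0 := by
  have hd' : 2 * α ^ 2 * d < a ^ 2 := by rwa [lt_div_iff₀' (by positivity)] at hd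
  have hnum : ∀ᶠ r in 𝓝 (0 : ℝ),
      d * (α ^ 2 + r ^ 2) ^ 2 - a ^ 2 / 4 * (2 * α ^ 2 + r ^ 2) < 0 := by
    refine ContinuousAt.eventually_lt (by fun_prop) continuousAt_const ?_
    nlinarith [pow_pos hα 2]
  filter_upwards [nhdsWithin_le_nhds hnum, self_mem_nhdsWithin] with r hr hr0
  rw [radialSymbol_eq_mul_div hα]
  exact div_neg_of_neg_of_pos (mul_neg_of_pos_of_neg (sq_pos_of_ne_zero hr0) hr) (by positivity)

theorem stmt_16_general (a d α : ℝ) (hα : 0 < α) :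
    ((∀ p : EuclideanSpace ℝ (Fin 3),
        0 ≤ d * ‖p‖ ^ 2 + a ^ 2 / 4 * α ^ 4 / (α ^ 2 + ‖p‖ ^ 2) ^ 2 - a ^ 2 / 4) ↔
      d ≥ a ^ 2 / (2 * α ^ 2)) ∧
    (d < a ^ 2 / (2 * α ^ 2) → ∃ δ > 0, ∀ p : EuclideanSpace ℝ (Fin 3), p ≠ 0 → ‖p‖ < δ →
      d * ‖p‖ ^ 2 + a ^ 2 / 4 * α ^ 4 / (α ^ 2 + ‖p‖ ^ 2) ^ 2 - a ^ 2 / 4 < 0) := by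
  have hneg (hlt : d < a ^ 2 / (2 * α ^ 2)) :
      ∀ᶠ p in 𝓝[≠] (0 : EuclideanSpace ℝ (Fin 3)), radialSymbol a d α ‖p‖ < 0 :=
    tendsto_norm_nhdsNE_zero.eventually
      (nhdsWithin_mono _ (fun _ h => ne_of_gt h) (eventually_radialSymbol_neg hα hlt))
  refine ⟨⟨fun hall => ?_, fun hge p => radialSymbol_nonneg hα hge ‖p‖⟩, fun hlt => ?_⟩
  · by_contra! hlt
    obtain ⟨p, hp⟩ := (hneg hlt).exists
    exact (hall p).not_gt hp
  · obtain ⟨δ, hδ, h⟩ := Metric.eventually_nhds_iff.1 (eventually_nhdsWithin_iff.1 (hneg hlt))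
    exact ⟨δ, hδ, fun p hp hpδ => h (by simpa using hpδ) hp⟩

theorem stmt_16 (a d α : ℝ) (ha : 0 < a) (hd : 0 < d) (hα : 0 < α) :
    ((∀ p : EuclideanSpace ℝ (Fin 3),
        0 ≤ d * ‖p‖ ^ 2 + a ^ 2 / 4 * α ^ 4 / (α ^ 2 + ‖p‖ ^ 2) ^ 2 - a ^ 2 / 4) ↔
      d ≥ a ^ 2 / (2 * α ^ 2)) ∧
    (d < a ^ 2 / (2 * α ^ 2) → ∃ δ > 0, ∀ p : EuclideanSpace ℝ (Fin 3), p ≠ 0 → ‖p‖ < δ →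
      d * ‖p‖ ^ 2 + a ^ 2 / 4 * α ^ 4 / (α ^ 2 + ‖p‖ ^ 2) ^ 2 - a ^ 2 / 4 < 0) :=
  stmt_16_general a d α hα
end
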